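/- Fix ε with 0 < ε ≤ 1/400 and set ε₀ = 16ε. With Q_{D'} the explicit quantile function defined in the context: (i) p·Q_{D'}(p) ≤ 0.4 for all p ∈ [0,1], with equality at p = 1/2 (so the monopoly price of D' is 1/2 with optimal revenue 0.4); and (ii) every p ∈ [0,1] with p·Q_{D'}(p) ≥ 0.4 − 1.6·ε satisfies p ≤ 1/2 + √ε. -/

import Mathlib

/-- Quantile function of the two-piece uniform distribution `D'`. -/
noncomputable def QD' (v : ℝ) : ℝ :=
  if v < 1 / 2 then 1 - 0.4 * v else 1.6 * (1 - v)

/-!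
For `p < 1/2` the revenue is `p * QD' p = 0.4 - 0.4 (1/2 - p) (2 - p) < 0.4`, and for `p ≥ 1/2` it is
`0.4 - 1.6 (p - 1/2)^2`. Hence the maximum `0.4` is attained at `p = 1/2`, and a price above `1/2`
losing at most `1.6 ε` of revenue satisfies `(p - 1/2)^2 ≤ ε`.
-/

theorem QD'_of_lt_half {p : ℝ} (hp : p < 1 / 2) : QD' p = 1 - 0.4 * p := if_pos hp

theorem QD'_of_half_le {p : ℝ} (hp : 1 / 2 ≤ p) : QD' p = 1.6 * (1 - p) := if_neg hp.not_gt

theorem mul_QD'_of_lt_half {p : ℝ} (hp : p < 1 / 2) :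
    p * QD' p = 0.4 - 0.4 * (1 / 2 - p) * (2 - p) := by
  rw [QD'_of_lt_half hp]; ring

theorem mul_QD'_of_half_le {p : ℝ} (hp : 1 / 2 ≤ p) :
    p * QD' p = 0.4 - 1.6 * (p - 1 / 2) ^ 2 := by
  rw [QD'_of_half_le hp]; ring

theorem mul_QD'_le (p : ℝ) : p * QD' p ≤ 0.4 := by
  rcases lt_or_ge p (1 / 2) with hp | hp
  · rw [mul_QD'_of_lt_half hp]
    nlinarith
  · rw [mul_QD'_of_half_le hp]
    nlinarith [sq_nonneg (p - 1 / 2)]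

theorem half_mul_QD'_half : 1 / 2 * QD' (1 / 2) = 0.4 := by
  rw [mul_QD'_of_half_le le_rfl]; norm_num

theorem le_half_add_sqrt_of_mul_QD'_ge {p ε : ℝ} (h : 0.4 - 1.6 * ε ≤ p * QD' p) :
    p ≤ 1 / 2 + √ε := by
  rcases lt_or_ge p (1 / 2) with hp | hp
  · linarith [Real.sqrt_nonneg ε]
  · rw [mul_QD'_of_half_le hp] at h
    have hsq : (p - 1 / 2) ^ 2 ≤ ε := by linarith
    linarith [le_abs_self (p - 1 / 2), Real.abs_le_sqrt hsq]

theorem monopoly_price_of_D'_general (ε : ℝ) :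
    (∀ p ∈ Set.Icc (0:ℝ) 1, p * QD' p ≤ 0.4) ∧
    (1 / 2) * QD' (1 / 2) = 0.4 ∧
    (∀ p ∈ Set.Icc (0:ℝ) 1, p * QD' p ≥ 0.4 - 1.6 * ε → p ≤ 1 / 2 + Real.sqrt ε) :=
  ⟨fun p _ => mul_QD'_le p, half_mul_QD'_half, fun _ _ => le_half_add_sqrt_of_mul_QD'_ge⟩

/-- For the distribution `D'`: (i) the revenue `p·Q_{D'}(p)` is at most `0.4` on `[0,1]`,
with equality at `p = 1/2`; and (ii) any `p ∈ [0,1]` with revenue at least `0.4 − 1.6ε`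
satisfies `p ≤ 1/2 + √ε`. -/
theorem monopoly_price_of_D' (ε : ℝ) (hε : 0 < ε) (hε' : ε ≤ 1 / 400) :
    (∀ p ∈ Set.Icc (0:ℝ) 1, p * QD' p ≤ 0.4) ∧
    (1 / 2) * QD' (1 / 2) = 0.4 ∧
    (∀ p ∈ Set.Icc (0:ℝ) 1, p * QD' p ≥ 0.4 - 1.6 * ε → p ≤ 1 / 2 + Real.sqrt ε) :=
  monopoly_price_of_D'_general ε
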